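/- arXiv:1401.5829 — 3 statements merged into one kernel-verified Lean document; each statement's English description precedes it below -/
import Mathlib

section
/- Suppose that for each p in (1,∞), E_p is a separable Banach space such that (a) E_p fails the bounded compact approximation property for each p in (1,∞), and (b) whenever q < r, every bounded linear operator from E_r to E_q is compact. Then there is no separable Banach space X such that for every p in (1,∞), E_p is isomorphic to a complemented subspace of X. -/
/-!
Realise the complemented copies by `J p : E p → X` and `R p : X → E p` with `R p ∘ J p = 1`.
As `X` is separable and there are uncountably many `p`, the projections `J p ∘ R p` cannot all be
isolated from each other: some `p` is a strong limit of `J (u n) ∘ R (u n)` with `u n ≠ p` and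
bounded norms (convergence on a dense sequence plus a norm bound gives convergence everywhere).
The operators `R p ∘ J (u n) ∘ R (u n) ∘ J p` on `E p` then factor through `E (u n)`, so they are
compact by (b) whichever of `p`, `u n` is larger; they are uniformly bounded and converge strongly
to `R p ∘ J p ∘ R p ∘ J p = 1`, so `E p` has the BCAP, contradicting (a).
-/
open Filter Topology

/-- The strong operator topology on the bounded operators on a normed space `X`: the topology
induced from pointwise convergence. -/
noncomputable def sotB (𝕜 X : Type*) [NontriviallyNormedField 𝕜] [NormedAddCommGroup X]
    [NormedSpace 𝕜 X] : TopologicalSpace (X →L[𝕜] X) :=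
  TopologicalSpace.induced (fun T => (T : X → X)) Pi.topologicalSpace

/-- A normed space `X` has the bounded compact approximation property if there is a uniformly
bounded net of compact operators on `X` converging to the identity in the strong operator
topology; equivalently, if the identity belongs to the SOT closure of some norm-bounded set of
compact operators. -/
def HasBCAP (𝕜 X : Type*) [NontriviallyNormedField 𝕜] [NormedAddCommGroup X]
    [NormedSpace 𝕜 X] : Prop :=
  ∃ M : ℝ, (1 : X →L[𝕜] X) ∈
    @closure _ (sotB 𝕜 X) {K : X →L[𝕜] X | IsCompactOperator K ∧ ‖K‖ ≤ M}

theorem exists_mem_closure_image_compl_singleton {ι Y : Type*} [Uncountable ι]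
    [TopologicalSpace Y] [SecondCountableTopology Y] (F : ι → Y) :
    ∃ p, F p ∈ closure (F '' {p}ᶜ) := by
  -- any point outside a countable dense set for the topology pulled back along `F` will do
  let _ : TopologicalSpace ι := .induced F ‹_›
  have : SecondCountableTopology ι := Topology.IsInducing.secondCountableTopology ⟨rfl⟩
  obtain ⟨C, hCc, hCd⟩ := TopologicalSpace.exists_countable_dense ι
  obtain ⟨p, hpC⟩ := (Set.ne_univ_iff_exists_notMem C).1 fun h => Set.not_countable_univ (h ▸ hCc)
  refine ⟨p, closure_mono (Set.image_mono (Set.subset_compl_singleton_iff.2 hpC)) ?_⟩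
  rw [← closure_induced]
  exact hCd p

theorem ContinuousLinearMap.tendsto_apply_of_denseRange {𝕜 ι X F : Type*}
    [NontriviallyNormedField 𝕜] [SeminormedAddCommGroup X] [SeminormedAddCommGroup F]
    [NormedSpace 𝕜 X] [NormedSpace 𝕜 F] {l : Filter ι} {T : ι → X →L[𝕜] F} {T₀ : X →L[𝕜] F}
    (hT : ∃ C, ∀ n, ‖T n‖ ≤ C) {x : ℕ → X} (hx : DenseRange x)
    (h : ∀ i, Tendsto (fun n => T n (x i)) l (𝓝 (T₀ (x i)))) (v : X) :
    Tendsto (fun n => T n v) l (𝓝 (T₀ v)) := by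
  have hT : Equicontinuous ((↑) ∘ T) := ((NormedSpace.equicontinuous_TFAE T).out 5 1).1 hT
  exact (hT.isClosed_setOfPred_tendsto T₀.continuous).closure_subset_iff.2
    (Set.range_subset_iff.2 h) (hx v)

theorem ContinuousLinearMap.exists_seq_ne_tendsto_apply {𝕜 ι X F : Type*} [Uncountable ι]
    [NontriviallyNormedField 𝕜] [NormedAddCommGroup X] [NormedAddCommGroup F]
    [NormedSpace 𝕜 X] [NormedSpace 𝕜 F] [TopologicalSpace.SeparableSpace X]
    [TopologicalSpace.SeparableSpace F] (T : ι → X →L[𝕜] F) :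
    ∃ p, ∃ u : ℕ → ι, (∀ n, u n ≠ p) ∧ (∃ C, ∀ n, ‖T (u n)‖ ≤ C) ∧
      ∀ v, Tendsto (fun n => T (u n) v) atTop (𝓝 (T p v)) := by
  obtain ⟨x, hx⟩ := TopologicalSpace.exists_dense_seq X
  have : SecondCountableTopology F := UniformSpace.secondCountable_of_separable F
  -- the first coordinate makes the approximating sequence norm-bounded
  obtain ⟨p, hp⟩ :=
    exists_mem_closure_image_compl_singleton fun q => (‖T q‖, fun i => T q (x i))
  obtain ⟨w, hw, hwp⟩ := mem_closure_iff_seq_limit.1 hp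
  choose u hup huw using hw
  have hu : Tendsto (fun n => (‖T (u n)‖, fun i => T (u n) (x i))) atTop
      (𝓝 (‖T p‖, fun i => T p (x i))) :=
    hwp.congr fun n => (huw n).symm
  obtain ⟨C, hC⟩ := hu.fst_nhds.bddAbove_range
  have hbdd : ∃ C, ∀ n, ‖T (u n)‖ ≤ C := ⟨C, fun n => hC ⟨n, rfl⟩⟩
  exact ⟨p, u, hup, hbdd, tendsto_apply_of_denseRange hbdd hx (tendsto_pi_nhds.1 hu.snd_nhds)⟩

theorem hasBCAP_of_tendsto {𝕜 E : Type*} [NontriviallyNormedField 𝕜] [NormedAddCommGroup E]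
    [NormedSpace 𝕜 E] {K : ℕ → E →L[𝕜] E} {M : ℝ} (hK : ∀ n, IsCompactOperator (K n))
    (hM : ∀ n, ‖K n‖ ≤ M) (hlim : ∀ v, Tendsto (fun n => K n v) atTop (𝓝 v)) :
    HasBCAP 𝕜 E := by
  refine ⟨M, ?_⟩
  rw [sotB, closure_induced]
  exact mem_closure_of_tendsto (tendsto_pi_nhds.2 hlim)
    (Eventually.of_forall fun n => ⟨K n, ⟨hK n, hM n⟩, rfl⟩)

theorem ContinuousLinearMap.exists_comp_eq_one_of_range_eq {𝕜 E X : Type*}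
    [NontriviallyNormedField 𝕜] [NormedAddCommGroup E] [NormedSpace 𝕜 E] [NormedAddCommGroup X]
    [NormedSpace 𝕜 X] {Q : X →L[𝕜] X} (hQ : Q.comp Q = Q) {Z : Submodule 𝕜 X}
    (hZ : LinearMap.range (Q : X →ₗ[𝕜] X) = Z) (e : E ≃L[𝕜] Z) :
    ∃ (J : E →L[𝕜] X) (R : X →L[𝕜] E), R.comp J = 1 := by
  have hQZ : ∀ x, Q x ∈ Z := fun x => hZ ▸ LinearMap.mem_range_self (Q : X →ₗ[𝕜] X) x
  have hQfix : ∀ z ∈ Z, Q z = z := by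
    rintro _ hz
    obtain ⟨x, rfl⟩ := LinearMap.mem_range.1 (hZ ▸ hz)
    exact congr($hQ x)
  refine ⟨Z.subtypeL.comp (e : E →L[𝕜] Z), (e.symm : Z →L[𝕜] E).comp (Q.codRestrict Z hQZ), ?_⟩
  ext v
  have : Q.codRestrict Z hQZ (e v) = e v := Subtype.ext (hQfix _ (e v).2)
  simp [this]

theorem uncountable_Ioi_real (a : ℝ) : Uncountable (Set.Ioi a) := by
  rw [← not_countable_iff, Set.countable_coe_iff]
  exact fun h => (lt_add_one a).not_ge
    (Cardinal.Real.Ioo_countable_iff.1 (h.mono Set.Ioo_subset_Ioi_self))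

theorem exists_hasBCAP_of_comp_eq_one {𝕜 ι X : Type*} [NontriviallyNormedField 𝕜]
    [LinearOrder ι] [Uncountable ι] {E : ι → Type*} [∀ i, NormedAddCommGroup (E i)]
    [∀ i, NormedSpace 𝕜 (E i)] [NormedAddCommGroup X] [NormedSpace 𝕜 X]
    [TopologicalSpace.SeparableSpace X] (J : ∀ i, E i →L[𝕜] X) (R : ∀ i, X →L[𝕜] E i)
    (hRJ : ∀ i, (R i).comp (J i) = 1)
    (hcpt : ∀ i j, i < j → ∀ A : E j →L[𝕜] E i, IsCompactOperator A) :
    ∃ i, HasBCAP 𝕜 (E i) := by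
  obtain ⟨p, u, hup, ⟨C, hC⟩, hlim⟩ :=
    ContinuousLinearMap.exists_seq_ne_tendsto_apply fun i => (J i).comp (R i)
  refine ⟨p, hasBCAP_of_tendsto (K := fun n => (R p).comp (((J (u n)).comp (R (u n))).comp (J p)))
    (M := ‖R p‖ * C * ‖J p‖) (fun n => ?_) (fun n => ?_) fun v => ?_⟩
  · have hfac : (R p).comp (((J (u n)).comp (R (u n))).comp (J p)) =
        ((R p).comp (J (u n))).comp ((R (u n)).comp (J p)) := by
      simp only [ContinuousLinearMap.comp_assoc]
    rw [hfac, ContinuousLinearMap.coe_comp]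
    rcases (hup n).lt_or_gt with hlt | hgt
    · exact (hcpt _ _ hlt _).clm_comp _
    · exact (hcpt _ _ hgt _).comp_clm _
  · calc _ ≤ ‖R p‖ * (‖(J (u n)).comp (R (u n))‖ * ‖J p‖) :=
          (ContinuousLinearMap.opNorm_comp_le _ _).trans
            (by gcongr; exact ContinuousLinearMap.opNorm_comp_le _ _)
      _ ≤ ‖R p‖ * C * ‖J p‖ := by rw [mul_assoc]; gcongr; exact hC n
  · have hRJp : ∀ w, R p (J p w) = w := fun w => congr($(hRJ p) w)
    have := ((R p).continuous.tendsto _).comp (hlim (J p v))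
    simp only [ContinuousLinearMap.comp_apply, Function.comp_def, hRJp] at this ⊢
    exact this

theorem stmt4_general {𝕜 : Type*} [NontriviallyNormedField 𝕜] (E : ℝ → Type*)
    [∀ p, NormedAddCommGroup (E p)] [∀ p, NormedSpace 𝕜 (E p)]
    (hBCAP : ∀ p ∈ Set.Ioi (1 : ℝ), ¬ HasBCAP 𝕜 (E p))
    (hcpt : ∀ q r : ℝ, 1 < q → q < r → ∀ A : E r →L[𝕜] E q, IsCompactOperator A) :
    ¬ ∃ (X : Type*) (_ : NormedAddCommGroup X) (_ : NormedSpace 𝕜 X) (_ : CompleteSpace X)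
        (_ : TopologicalSpace.SeparableSpace X),
      ∀ p ∈ Set.Ioi (1 : ℝ), ∃ (Z : Submodule 𝕜 X) (Q : X →L[𝕜] X),
        IsClosed (Z : Set X) ∧ Q.comp Q = Q ∧ LinearMap.range (Q : X →ₗ[𝕜] X) = Z ∧
        Nonempty (E p ≃L[𝕜] Z) := by
  rintro ⟨X, _, _, _, _, h⟩
  have : Uncountable (Set.Ioi (1 : ℝ)) := uncountable_Ioi_real 1
  have hretract :
      ∀ p : Set.Ioi (1 : ℝ), ∃ (J : E p →L[𝕜] X) (R : X →L[𝕜] E p), R.comp J = 1 := by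
    rintro ⟨p, hp⟩
    obtain ⟨Z, Q, -, hQ, hZ, ⟨e⟩⟩ := h p hp
    exact ContinuousLinearMap.exists_comp_eq_one_of_range_eq hQ hZ e
  choose J R hRJ using hretract
  obtain ⟨⟨p, hp⟩, hp_bcap⟩ :=
    exists_hasBCAP_of_comp_eq_one (E := fun p : Set.Ioi (1 : ℝ) => E p) J R hRJ
      fun q r hqr => hcpt q r q.2 hqr
  exact hBCAP p hp hp_bcap

/-- **Lemma 2.4.** If each `E p`, `p ∈ (1,∞)`, is a separable Banach space failing
the BCAP, and every operator `E r → E q` is compact whenever `1 < q < r`, then no separable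
Banach space contains complemented isomorphic copies of all the `E p`. -/
theorem stmt4 {𝕜 : Type*} [NontriviallyNormedField 𝕜] (E : ℝ → Type*)
    [∀ p, NormedAddCommGroup (E p)] [∀ p, NormedSpace 𝕜 (E p)] [∀ p, CompleteSpace (E p)]
    [∀ p, TopologicalSpace.SeparableSpace (E p)]
    (hBCAP : ∀ p ∈ Set.Ioi (1 : ℝ), ¬ HasBCAP 𝕜 (E p))
    (hcpt : ∀ q r : ℝ, 1 < q → q < r → ∀ A : E r →L[𝕜] E q, IsCompactOperator A) :
    ¬ ∃ (X : Type*) (_ : NormedAddCommGroup X) (_ : NormedSpace 𝕜 X) (_ : CompleteSpace X)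
        (_ : TopologicalSpace.SeparableSpace X),
      ∀ p ∈ Set.Ioi (1 : ℝ), ∃ (Z : Submodule 𝕜 X) (Q : X →L[𝕜] X),
        IsClosed (Z : Set X) ∧ Q.comp Q = Q ∧ LinearMap.range (Q : X →ₗ[𝕜] X) = Z ∧
        Nonempty (E p ≃L[𝕜] Z) :=
  stmt4_general E hBCAP hcpt
end

section
/- Let H be a separable infinite-dimensional complex Hilbert space, let T1 and T3 be bounded operators on H, and let T2 and T4 be bounded operators on a (not necessarily separable) complex Hilbert space G. If T1 ⊕ T2 is unitarily equivalent to T3 ⊕ T4 (as operators on H ⊕ G), then there exists a separable closed subspace M of G, invariant under each of T2, T2*, T4, T4*, such that T1 ⊕ (T2|_M) is unitarily equivalent to T3 ⊕ (T4|_M). -/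
open Filter Topology ContinuousLinearMap

/-- Conjugation of an operator by a unitary (linear isometric equivalence): `W T W*`. -/
noncomputable def conjOp {H₁ H₂ : Type*} [NormedAddCommGroup H₁] [InnerProductSpace ℂ H₁]
    [NormedAddCommGroup H₂] [InnerProductSpace ℂ H₂]
    (W : H₁ ≃ₗᵢ[ℂ] H₂) (T : H₁ →L[ℂ] H₁) : H₂ →L[ℂ] H₂ :=
  ((W.toContinuousLinearEquiv : H₁ →L[ℂ] H₂).comp T).comp
    ((W.symm.toContinuousLinearEquiv : H₂ →L[ℂ] H₁))

/-- The restriction of an operator to an invariant subspace. -/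
noncomputable def opRestrict {H : Type*} [NormedAddCommGroup H] [InnerProductSpace ℂ H]
    (T : H →L[ℂ] H) (M : Submodule ℂ H) (hM : ∀ x ∈ M, T x ∈ M) : M →L[ℂ] M :=
  { toLinearMap := (T : H →ₗ[ℂ] H).restrict hM
    cont := Continuous.subtype_mk (T.continuous.comp continuous_subtype_val) _ }

/-- Two operators (possibly on different Hilbert spaces) are *compalent* if one is a compact
perturbation of a unitary conjugate of the other: `T₂ = W T₁ W* + K` with `K` compact. -/
def Compalent {H₁ H₂ : Type*} [NormedAddCommGroup H₁] [InnerProductSpace ℂ H₁]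
    [NormedAddCommGroup H₂] [InnerProductSpace ℂ H₂]
    (T₁ : H₁ →L[ℂ] H₁) (T₂ : H₂ →L[ℂ] H₂) : Prop :=
  ∃ W : H₁ ≃ₗᵢ[ℂ] H₂, IsCompactOperator (T₂ - conjOp W T₁)

/-- `S` is compalent to a reducing part of `T`, that is, to the restriction of `T` to a closed
subspace invariant under both `T` and `T*`. -/
def CompalentToReducingPart {H : Type*} [NormedAddCommGroup H] [InnerProductSpace ℂ H]
    [CompleteSpace H] (S T : H →L[ℂ] H) : Prop :=
  ∃ (M : Submodule ℂ H) (_ : IsClosed (M : Set H))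
    (hT : ∀ x ∈ M, T x ∈ M) (_ : ∀ x ∈ M, ContinuousLinearMap.adjoint T x ∈ M),
    Compalent S (opRestrict T M hT)

/-- The direct sum `T ⊕ S` of two operators, acting on the Hilbert space direct sum
`H₁ ⊕ H₂ = WithLp 2 (H₁ × H₂)`. -/
noncomputable def dSum {H₁ H₂ : Type*} [NormedAddCommGroup H₁] [InnerProductSpace ℂ H₁]
    [NormedAddCommGroup H₂] [InnerProductSpace ℂ H₂]
    (T : H₁ →L[ℂ] H₁) (S : H₂ →L[ℂ] H₂) :
    WithLp 2 (H₁ × H₂) →L[ℂ] WithLp 2 (H₁ × H₂) :=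
  (((WithLp.prodContinuousLinearEquiv 2 ℂ H₁ H₂).symm : H₁ × H₂ →L[ℂ] WithLp 2 (H₁ × H₂)).comp
    (T.prodMap S)).comp
    ((WithLp.prodContinuousLinearEquiv 2 ℂ H₁ H₂ : WithLp 2 (H₁ × H₂) →L[ℂ] H₁ × H₂))


/-!
Let `W` implement the equivalence on `H ⊕ G`. Closing `H ⊕ 0` under `W`, `W*` and `0 ⊕ S` for
`S ∈ {T₂, T₂*, T₄, T₄*}` and taking the closed span gives a separable closed subspace `N`
(countably many words applied to a separable set). As `N ⊇ H ⊕ 0`, it is `H ⊕ M` for a closed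
`M ⊆ G`, which reduces `T₂` and `T₄` because `N` is invariant under the `0 ⊕ S`. Since `N` reduces
`W`, the restriction of `W` to `N ≅ H ⊕ M` implements the required equivalence.
-/

open TopologicalSpace

section InvariantSubspace

variable {R E : Type*} [Semiring R] [TopologicalSpace R] [SeparableSpace R]
  [AddCommMonoid E] [Module R E] [TopologicalSpace E] [ContinuousAdd E] [ContinuousSMul R E]

theorem exists_isClosed_isSeparable_submodule_mapsTo {ι : Type*} [Countable ι]
    (f : ι → E →L[R] E) {s : Set E} (hs : IsSeparable s) :
    ∃ N : Submodule R E, IsClosed (N : Set E) ∧ IsSeparable (N : Set E) ∧ s ⊆ N ∧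
      ∀ i, Set.MapsTo (f i) N N := by
  set U : Set E := ⋃ w : List ι, (w.map f).prod '' s
  have hsU : s ⊆ U := fun x hx => Set.mem_iUnion.2 ⟨[], x, hx, rfl⟩
  have hUsep : IsSeparable U := .iUnion fun w => hs.image (ContinuousLinearMap.continuous _)
  have hUinv (i : ι) : Set.MapsTo (f i) U U := by
    rintro _ hx
    obtain ⟨w, y, hy, rfl⟩ := Set.mem_iUnion.1 hx
    exact Set.mem_iUnion.2 ⟨i :: w, y, hy, by simp⟩
  refine ⟨(Submodule.span R U).topologicalClosure, Submodule.isClosed_topologicalClosure _,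
    hUsep.span.closure, hsU.trans (Submodule.subset_span.trans
      (Submodule.le_topologicalClosure _)), fun i => ?_⟩
  refine Submodule.topologicalClosure_mem_invtSubmodule ?_
  rw [Module.End.mem_invtSubmodule, Submodule.span_le]
  exact (hUinv i).mono_right Submodule.subset_span

end InvariantSubspace

section LpProd

open WithLp

variable {p : ENNReal} {𝕜 α β : Type*} [Ring 𝕜] [AddCommGroup α] [AddCommGroup β]
  [Module 𝕜 α] [Module 𝕜 β]

variable (p 𝕜 α β) in
def WithLp.inrL [TopologicalSpace α] [TopologicalSpace β] : β →L[𝕜] WithLp p (α × β) :=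
  (prodContinuousLinearEquiv p 𝕜 α β).symm.toContinuousLinearMap.comp
    (ContinuousLinearMap.inr 𝕜 α β)

variable (p α) in
def lpProdTop (M : Submodule 𝕜 β) : Submodule 𝕜 (WithLp p (α × β)) :=
  M.comap (sndₗ p 𝕜 α β)

theorem lpProdTop_comap_inrL [TopologicalSpace α] [TopologicalSpace β]
    {N : Submodule 𝕜 (WithLp p (α × β))} (hN : ∀ a : α, toLp p (a, 0) ∈ N) :
    lpProdTop p α (N.comap (inrL p 𝕜 α β).toLinearMap) = N := by
  ext x
  have hx : toLp p (x.fst, 0) + toLp p (0, x.snd) = x := by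
    rw [← toLp_add, Prod.mk_add_mk, add_zero, zero_add]; rfl
  change toLp p (0, x.snd) ∈ N ↔ x ∈ N
  conv_rhs => rw [← hx]
  exact (N.add_mem_iff_right (hN x.fst)).symm

end LpProd

section DirectSum

open WithLp

variable {H G : Type*} [NormedAddCommGroup H] [InnerProductSpace ℂ H]
  [NormedAddCommGroup G] [InnerProductSpace ℂ G]

theorem mapsTo_dSum_lpProdTop_iff {T : H →L[ℂ] H} {S : G →L[ℂ] G} {M : Submodule ℂ G} :
    Set.MapsTo (dSum T S) (lpProdTop 2 H M) (lpProdTop 2 H M) ↔ Set.MapsTo S M M :=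
  ⟨fun h g hg => h (x := toLp 2 (0, g)) hg, fun h _ hx => h hx⟩

variable (H) in
def lpProdTopEquiv (M : Submodule ℂ G) : WithLp 2 (H × M) ≃ₗᵢ[ℂ] lpProdTop 2 H M where
  toFun x := ⟨toLp 2 (x.fst, x.snd), x.snd.2⟩
  invFun x := toLp 2 (x.1.fst, ⟨x.1.snd, x.2⟩)
  map_add' _ _ := rfl
  map_smul' _ _ := rfl
  left_inv _ := rfl
  right_inv _ := rfl
  norm_map' x := (prod_norm_eq_of_L2 _).trans (prod_norm_eq_of_L2 x).symm

theorem exists_conjOp_dSum_opRestrict {T₁ T₃ : H →L[ℂ] H} {T₂ T₄ : G →L[ℂ] G}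
    {W : WithLp 2 (H × G) ≃ₗᵢ[ℂ] WithLp 2 (H × G)} (hW : dSum T₃ T₄ = conjOp W (dSum T₁ T₂))
    {M : Submodule ℂ G} (hWM : Set.MapsTo W (lpProdTop 2 H M) (lpProdTop 2 H M))
    (hWM' : Set.MapsTo W.symm (lpProdTop 2 H M) (lpProdTop 2 H M))
    (h₂ : ∀ x ∈ M, T₂ x ∈ M) (h₄ : ∀ x ∈ M, T₄ x ∈ M) :
    ∃ V : WithLp 2 (H × M) ≃ₗᵢ[ℂ] WithLp 2 (H × M),
      dSum T₃ (opRestrict T₄ M h₄) = conjOp V (dSum T₁ (opRestrict T₂ M h₂)) := by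
  have hmap : (lpProdTop 2 H M).map (W : WithLp 2 (H × G) →ₗ[ℂ] WithLp 2 (H × G)) =
      lpProdTop 2 H M :=
    le_antisymm (Submodule.map_le_iff_le_comap.2 fun _ hx => hWM hx)
      fun x hx => ⟨W.symm x, hWM' hx, W.apply_symm_apply x⟩
  let e := lpProdTopEquiv H M
  refine ⟨(e.trans ((W.submoduleMap _).trans (.ofEq _ _ hmap))).trans e.symm, ?_⟩
  ext x : 1
  exact e.injective (Subtype.ext (congr($hW (e x))))

end DirectSum

theorem stmt12_general {H : Type*} [NormedAddCommGroup H] [InnerProductSpace ℂ H]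
    [TopologicalSpace.SeparableSpace H]
    {G : Type*} [NormedAddCommGroup G] [InnerProductSpace ℂ G] [CompleteSpace G]
    (T₁ T₃ : H →L[ℂ] H) (T₂ T₄ : G →L[ℂ] G)
    (h : ∃ W : WithLp 2 (H × G) ≃ₗᵢ[ℂ] WithLp 2 (H × G),
      dSum T₃ T₄ = conjOp W (dSum T₁ T₂)) :
    ∃ (M : Submodule ℂ G) (_ : IsClosed (M : Set G))
      (_ : TopologicalSpace.SeparableSpace M)
      (h₂ : ∀ x ∈ M, T₂ x ∈ M) (_ : ∀ x ∈ M, ContinuousLinearMap.adjoint T₂ x ∈ M)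
      (h₄ : ∀ x ∈ M, T₄ x ∈ M) (_ : ∀ x ∈ M, ContinuousLinearMap.adjoint T₄ x ∈ M),
      ∃ V : WithLp 2 (H × M) ≃ₗᵢ[ℂ] WithLp 2 (H × M),
        dSum T₃ (opRestrict T₄ M h₄) = conjOp V (dSum T₁ (opRestrict T₂ M h₂)) := by
  obtain ⟨W, hW⟩ := h
  have hHsep : IsSeparable (Set.range fun a : H => WithLp.toLp 2 (a, (0 : G))) :=
    isSeparable_range (by fun_prop)
  obtain ⟨N, hNcl, hNsep, hHN, hNinv⟩ := exists_isClosed_isSeparable_submodule_mapsTo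
    ![dSum 0 T₂, dSum 0 (adjoint T₂), dSum 0 T₄, dSum 0 (adjoint T₄),
      (W : WithLp 2 (H × G) →L[ℂ] WithLp 2 (H × G)), (W.symm : _ →L[ℂ] _)] hHsep
  set M := N.comap (WithLp.inrL 2 ℂ H G).toLinearMap
  have hMN : lpProdTop 2 H M = N := lpProdTop_comap_inrL fun a => hHN ⟨a, rfl⟩
  have hM (S : G →L[ℂ] G) (hS : Set.MapsTo (dSum (0 : H →L[ℂ] H) S) N N) :
      Set.MapsTo S M M :=
    mapsTo_dSum_lpProdTop_iff.1 (by rwa [hMN])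
  have hMsep : IsSeparable (M : Set G) :=
    (hNsep.image (WithLp.sndL 2 ℂ H G).continuous).mono fun g hg => ⟨_, hg, rfl⟩
  exact ⟨M, hNcl.preimage (WithLp.inrL 2 ℂ H G).continuous, hMsep.separableSpace,
    hM _ (hNinv 0), hM _ (hNinv 1), hM _ (hNinv 2), hM _ (hNinv 3),
    exists_conjOp_dSum_opRestrict hW (by rw [hMN]; exact hNinv 4) (by rw [hMN]; exact hNinv 5)
      _ _⟩

/-- **Lemma 3.2.** If `T₁ ⊕ T₂ ≅ T₃ ⊕ T₄` with `T₁, T₃` acting on a separable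
space `H` and `T₂, T₄` on a possibly nonseparable Hilbert space `G`, then there is a separable
closed subspace `M` of `G` reducing both `T₂` and `T₄` with
`T₁ ⊕ (T₂|_M) ≅ T₃ ⊕ (T₄|_M)`. -/
theorem stmt12 {H : Type*} [NormedAddCommGroup H] [InnerProductSpace ℂ H] [CompleteSpace H]
    [TopologicalSpace.SeparableSpace H] (hinf : ¬ FiniteDimensional ℂ H)
    {G : Type*} [NormedAddCommGroup G] [InnerProductSpace ℂ G] [CompleteSpace G]
    (T₁ T₃ : H →L[ℂ] H) (T₂ T₄ : G →L[ℂ] G)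
    (h : ∃ W : WithLp 2 (H × G) ≃ₗᵢ[ℂ] WithLp 2 (H × G),
      dSum T₃ T₄ = conjOp W (dSum T₁ T₂)) :
    ∃ (M : Submodule ℂ G) (_ : IsClosed (M : Set G))
      (_ : TopologicalSpace.SeparableSpace M)
      (h₂ : ∀ x ∈ M, T₂ x ∈ M) (_ : ∀ x ∈ M, ContinuousLinearMap.adjoint T₂ x ∈ M)
      (h₄ : ∀ x ∈ M, T₄ x ∈ M) (_ : ∀ x ∈ M, ContinuousLinearMap.adjoint T₄ x ∈ M),
      ∃ V : WithLp 2 (H × M) ≃ₗᵢ[ℂ] WithLp 2 (H × M),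
        dSum T₃ (opRestrict T₄ M h₄) = conjOp V (dSum T₁ (opRestrict T₂ M h₂)) :=
  stmt12_general T₁ T₃ T₂ T₄ h
end

section
/- Let H be a separable infinite-dimensional complex Hilbert space and let T be a bounded operator on H ⊕ H such that the subspace H ⊕ {0} is invariant under T. Let B = T|_{H⊕{0}}, viewed as a bounded operator on H ⊕ {0}. Then there exists a sequence (W_n) of unitary operators from H ⊕ H onto H ⊕ {0} such that W_n T W_n* converges to B in the strong operator topology. -/
/-!
Fix a Hilbert basis `(bᵢ)` of `H`, indexed by `ℕ`. Then the vectors `(bᵢ, 0)`, `(0, bⱼ)` form a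
Hilbert basis of `H ⊕ H`, and for each `n` there is a unitary `Wₙ : H ⊕ H → H` sending it onto
`(bᵢ)` so that `(bᵢ, 0) ↦ bᵢ` for `i < n`. Being isometries, `Wₙ` and `Wₙ*` converge strongly as
soon as they converge on a basis, so `Wₙ (x, 0) → x` and `Wₙ* x → (x, 0)`. Hence
`Wₙ T Wₙ* x` is close to `Wₙ T (x, 0) = Wₙ (B x, 0)`, which tends to `B x`.
-/

open Filter Topology ContinuousLinearMap

open scoped InnerProductSpace

theorem Orthonormal.countable {ι 𝕜 E : Type*} [RCLike 𝕜] [NormedAddCommGroup E]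
    [InnerProductSpace 𝕜 E] [TopologicalSpace.SeparableSpace E] {v : ι → E}
    (hv : Orthonormal 𝕜 v) : Countable ι := by
  refine Pairwise.countable_of_isOpen_disjoint (s := fun i => Metric.ball (v i) (1 / 2))
    (fun i j hij => Metric.ball_disjoint_ball ?_) (fun _ => Metric.isOpen_ball)
    (fun i => ⟨v i, Metric.mem_ball_self (by norm_num)⟩)
  have hdist : ‖v i - v j‖ ^ 2 = 2 := by
    rw [@norm_sub_sq 𝕜, hv.1 i, hv.1 j, hv.2 hij]; norm_num
  rw [dist_eq_norm]
  nlinarith [norm_nonneg (v i - v j)]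

-- keeps `inl k` in place for `k < n`, and interleaves the remaining `inl k` and all `inr k`
-- as the even and odd numbers beyond `n`
def natSumNatEquivNatFixing (n : ℕ) : ℕ ⊕ ℕ ≃ ℕ where
  toFun
    | .inl k => if k < n then k else n + 2 * (k - n)
    | .inr k => n + 2 * k + 1
  invFun m := if m < n then .inl m
    else if (m - n) % 2 = 0 then .inl (n + (m - n) / 2) else .inr ((m - n) / 2)
  left_inv := by
    rintro (k | k) <;> dsimp only <;> split_ifs <;>
      (try simp only [Sum.inl.injEq, Sum.inr.injEq]) <;> omega
  right_inv m := by
    dsimp only; split_ifs <;> dsimp only <;> (try split_ifs) <;> omega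

theorem natSumNatEquivNatFixing_inl {n k : ℕ} (h : k < n) :
    natSumNatEquivNatFixing n (.inl k) = k := by
  simp [natSumNatEquivNatFixing, h]

noncomputable def WithLp.inlLinearIsometry (𝕜 E F : Type*) [RCLike 𝕜] [SeminormedAddCommGroup E]
    [NormedSpace 𝕜 E] [SeminormedAddCommGroup F] [NormedSpace 𝕜 F] :
    E →ₗᵢ[𝕜] WithLp 2 (E × F) where
  toLinearMap := (WithLp.linearEquiv 2 𝕜 (E × F)).symm.toLinearMap ∘ₗ LinearMap.inl 𝕜 E F
  norm_map' := WithLp.norm_toLp_fst 2 E F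

theorem WithLp.inlLinearIsometry_apply {𝕜 E F : Type*} [RCLike 𝕜] [SeminormedAddCommGroup E]
    [NormedSpace 𝕜 E] [SeminormedAddCommGroup F] [NormedSpace 𝕜 F] (x : E) :
    WithLp.inlLinearIsometry 𝕜 E F x = WithLp.toLp 2 (x, 0) := rfl

theorem Filter.Tendsto.isometry_apply {α X Y : Type*} [PseudoMetricSpace X] [PseudoMetricSpace Y]
    {l : Filter α} {f : α → X → Y} (hf : ∀ a, Isometry (f a)) {x : α → X} {x₀ : X} {y : Y}
    (hx : Tendsto x l (𝓝 x₀)) (hfx₀ : Tendsto (fun a => f a x₀) l (𝓝 y)) :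
    Tendsto (fun a => f a (x a)) l (𝓝 y) :=
  hfx₀.congr_dist (by simpa [(hf _).dist_eq, dist_comm] using tendsto_iff_dist_tendsto_zero.1 hx)

namespace HilbertBasis

variable {ι κ 𝕜 E F : Type*} [RCLike 𝕜] [NormedAddCommGroup E] [InnerProductSpace 𝕜 E]
  [NormedAddCommGroup F] [InnerProductSpace 𝕜 F]

noncomputable def equiv (b : HilbertBasis ι 𝕜 E) (b' : HilbertBasis ι 𝕜 F) : E ≃ₗᵢ[𝕜] F :=
  b.repr.trans b'.repr.symm

theorem equiv_apply (b : HilbertBasis ι 𝕜 E) (b' : HilbertBasis ι 𝕜 F) (i : ι) :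
    b.equiv b' (b i) = b' i := by
  classical
  rw [equiv, LinearIsometryEquiv.trans_apply, b.repr_self, b'.repr_symm_single]

theorem eq_zero_of_forall_inner_eq_zero (b : HilbertBasis ι 𝕜 E) {x : E}
    (hx : ∀ i, ⟪b i, x⟫_𝕜 = 0) : x = 0 :=
  b.repr.map_eq_zero_iff.1 (lp.ext (funext fun i => by simp [b.repr_apply_apply, hx]))

variable [CompleteSpace E]

noncomputable def reindex (b : HilbertBasis ι 𝕜 E) (e : ι ≃ κ) : HilbertBasis κ 𝕜 E :=
  HilbertBasis.mk (b.orthonormal.comp _ e.symm.injective)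
    (by rw [e.symm.surjective.range_comp, b.dense_span])

theorem reindex_apply (b : HilbertBasis ι 𝕜 E) (e : ι ≃ κ) (k : κ) :
    b.reindex e k = b (e.symm k) := by
  rw [reindex, HilbertBasis.coe_mk]; rfl

variable [CompleteSpace F]

noncomputable def prod (b : HilbertBasis ι 𝕜 E) (b' : HilbertBasis κ 𝕜 F) :
    HilbertBasis (ι ⊕ κ) 𝕜 (WithLp 2 (E × F)) :=
  HilbertBasis.mkOfOrthogonalEqBot
    (v := Sum.elim (fun i => WithLp.toLp 2 (b i, 0)) (fun j => WithLp.toLp 2 (0, b' j)))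
    (by
      classical
      rw [orthonormal_iff_ite]
      rintro (i | i) (j | j) <;> simp [orthonormal_iff_ite.1 b.orthonormal,
        orthonormal_iff_ite.1 b'.orthonormal])
    (by
      refine (Submodule.eq_bot_iff _).2 fun z hz => ?_
      have h := fun k => Submodule.inner_right_of_mem_orthogonal
        (Submodule.subset_span (Set.mem_range_self k)) hz
      have h1 := b.eq_zero_of_forall_inner_eq_zero fun i => by simpa using h (Sum.inl i)
      have h2 := b'.eq_zero_of_forall_inner_eq_zero fun j => by simpa using h (Sum.inr j)
      rw [WithLp.ext_iff]
      ext <;> simp [h1, h2])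

theorem prod_apply_inl (b : HilbertBasis ι 𝕜 E) (b' : HilbertBasis κ 𝕜 F) (i : ι) :
    b.prod b' (Sum.inl i) = WithLp.toLp 2 (b i, 0) := by
  rw [prod, HilbertBasis.coe_mkOfOrthogonalEqBot]; rfl

end HilbertBasis

theorem HilbertBasis.tendsto_linearIsometry_apply {α ι 𝕜 E F : Type*} [RCLike 𝕜]
    [NormedAddCommGroup E] [InnerProductSpace 𝕜 E] [SeminormedAddCommGroup F] [NormedSpace 𝕜 F]
    (b : HilbertBasis ι 𝕜 E) {l : Filter α} {A : α → E →ₗᵢ[𝕜] F} {A₀ : E →L[𝕜] F}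
    (hb : ∀ i, Tendsto (fun a => A a (b i)) l (𝓝 (A₀ (b i)))) (x : E) :
    Tendsto (fun a => A a x) l (𝓝 (A₀ x)) := by
  let S : Submodule 𝕜 E :=
    { carrier := {y | Tendsto (fun a => A a y) l (𝓝 (A₀ y))}
      add_mem' := fun hy hz => by simpa using hy.add hz
      zero_mem' := by simpa using tendsto_const_nhds
      smul_mem' := fun c y hy => by simpa using hy.const_smul c }
  -- isometries form an equicontinuous family, so convergence to `A₀ y` is a closed condition on `y`
  have hS : IsClosed (S : Set E) :=
    (LipschitzWith.uniformEquicontinuous _ 1 fun a => (A a).lipschitz).equicontinuous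
      |>.isClosed_setOfPred_tendsto A₀.continuous
  have hspan : Submodule.span 𝕜 (Set.range b) ≤ S :=
    Submodule.span_le.2 (Set.range_subset_iff.2 hb)
  have hclosure := Submodule.topologicalClosure_minimal _ hspan hS
  rw [b.dense_span] at hclosure
  exact hclosure Submodule.mem_top

theorem exists_hilbertBasis_nat {𝕜 E : Type*} [RCLike 𝕜] [NormedAddCommGroup E]
    [InnerProductSpace 𝕜 E] [CompleteSpace E] [TopologicalSpace.SeparableSpace E]
    (hE : ¬ FiniteDimensional 𝕜 E) : Nonempty (HilbertBasis ℕ 𝕜 E) := by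
  obtain ⟨w, b, -⟩ := exists_hilbertBasis 𝕜 E
  have : Countable w := b.orthonormal.countable
  have : Infinite w := by
    by_contra hfin
    have : Finite w := not_infinite_iff_finite.1 hfin
    have := Fintype.ofFinite w
    exact hE (Module.Finite.of_basis b.toOrthonormalBasis.toBasis)
  obtain ⟨d⟩ := nonempty_denumerable w
  exact ⟨b.reindex (Denumerable.eqv w)⟩

/-- **Lemma 3.9.** If `T` is an operator on `H ⊕ H` leaving `H ⊕ {0}` invariant
and `B` is its restriction to `H ⊕ {0}` (identified with `H`), then there are unitaries
`Wₙ : H ⊕ H → H ⊕ {0}` with `Wₙ T Wₙ* → B` in the strong operator topology. -/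
theorem stmt18 {H : Type*} [NormedAddCommGroup H] [InnerProductSpace ℂ H] [CompleteSpace H]
    [TopologicalSpace.SeparableSpace H] (hinf : ¬ FiniteDimensional ℂ H)
    (T : WithLp 2 (H × H) →L[ℂ] WithLp 2 (H × H)) (B : H →L[ℂ] H)
    (hB : ∀ x : H, T ((WithLp.equiv 2 (H × H)).symm (x, 0)) =
      (WithLp.equiv 2 (H × H)).symm (B x, 0)) :
    ∃ W : ℕ → (WithLp 2 (H × H) ≃ₗᵢ[ℂ] H),
      ∀ x : H, Filter.Tendsto (fun n => conjOp (W n) T x) Filter.atTop (nhds (B x)) := by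
  obtain ⟨b⟩ := exists_hilbertBasis_nat hinf
  let ι := WithLp.inlLinearIsometry ℂ H H
  let W n := (b.prod b).equiv (b.reindex (natSumNatEquivNatFixing n).symm)
  have hW : ∀ i, ∀ᶠ n in atTop, W n (ι (b i)) = b i := fun i =>
    eventually_atTop.2 ⟨i + 1, fun n hn => by
      rw [WithLp.inlLinearIsometry_apply, ← b.prod_apply_inl b, HilbertBasis.equiv_apply,
        HilbertBasis.reindex_apply, Equiv.symm_symm, natSumNatEquivNatFixing_inl (by omega)]⟩
  have hWι (y : H) : Tendsto (fun n => W n (ι y)) atTop (𝓝 y) :=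
    b.tendsto_linearIsometry_apply (A := fun n => (W n).toLinearIsometry.comp ι)
      (A₀ := .id ℂ H) (fun i => tendsto_const_nhds.congr' ((hW i).mono fun _ h => h.symm)) y
  have hWsymm (y : H) : Tendsto (fun n => (W n).symm y) atTop (𝓝 (ι y)) :=
    b.tendsto_linearIsometry_apply (A := fun n => (W n).symm.toLinearIsometry)
      (A₀ := ι.toContinuousLinearMap)
      (fun i => tendsto_const_nhds.congr' ((hW i).mono fun n h =>
        ((W n).symm_apply_eq.2 h.symm).symm)) y
  refine ⟨W, fun x => ?_⟩
  have hTι : T (ι x) = ι (B x) := hB x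
  refine Tendsto.isometry_apply (fun n => (W n).isometry) ?_ (hWι (B x))
  have hTW := (T.continuous.tendsto _).comp (hWsymm x)
  rwa [hTι] at hTW
end
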